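/- arXiv:1407.6135 — 9 statements merged into one kernel-verified Lean document; each statement's English description precedes it below -/
import Mathlib

section
/- If an m-process U on a complete metric space is pullback asymptotically compact, then for every bounded set B and every t ∈ ℝ, the ω-limit set ω(t,B) pullback attracts B, i.e., dist(U(t,τ;B), ω(t,B)) → 0 as τ → -∞, where dist is the Hausdorff semidistance. -/
open Filter Metric Set Topology Bornology

/-- `uSet U t s A = ⋃_{y ∈ A} U(t,s;y)`. -/
def uSet {X : Type*} [MetricSpace X] (U : ℝ → ℝ → X → Set X) (t s : ℝ) (A : Set X) : Set X :=
  ⋃ y ∈ A, U t s y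

/-- A multivalued process on `X`. -/
def IsMProcess {X : Type*} [MetricSpace X] (U : ℝ → ℝ → X → Set X) : Prop :=
  (∀ t x, U t t x = {x}) ∧
    ∀ t s τ : ℝ, τ ≤ s → s ≤ t → ∀ x, U t τ x ⊆ uSet U t s (U s τ x)

/-- Pullback asymptotic compactness. -/
def PullbackAsympCompact {X : Type*} [MetricSpace X] (U : ℝ → ℝ → X → Set X) : Prop :=
  ∀ B : Set X, IsBounded B → ∀ t : ℝ, ∀ τ : ℕ → ℝ, ∀ ξ : ℕ → X,
    Tendsto τ atTop atBot → (∀ n, ξ n ∈ uSet U t (τ n) B) →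
    ∃ (x : X) (φ : ℕ → ℕ), StrictMono φ ∧ Tendsto (ξ ∘ φ) atTop (𝓝 x)

/-- The pullback ω-limit set (sequence characterization). -/
def omegaLim {X : Type*} [MetricSpace X] (U : ℝ → ℝ → X → Set X) (t : ℝ) (B : Set X) :
    Set X :=
  {x | ∃ (τ : ℕ → ℝ) (ξ : ℕ → X), Tendsto τ atTop atBot ∧
    (∀ n, ξ n ∈ uSet U t (τ n) B) ∧ Tendsto ξ atTop (𝓝 x)}

/-- `K` pullback attracts `B` at time `t`: the Hausdorff semidistance from
`U(t,τ;B)` to `K` tends to `0` as `τ → -∞`. -/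
def Attracts {X : Type*} [MetricSpace X] (U : ℝ → ℝ → X → Set X) (t : ℝ)
    (B K : Set X) : Prop :=
  ∀ ε > (0 : ℝ), ∃ T : ℝ, ∀ τ ≤ T, ∀ y ∈ uSet U t τ B, Metric.infDist y K ≤ ε

theorem omega_limit_attracts {X : Type*} [MetricSpace X] [CompleteSpace X]
    (U : ℝ → ℝ → X → Set X) (hU : IsMProcess U) (hac : PullbackAsympCompact U)
    (B : Set X) (hB : IsBounded B) (t : ℝ) :
    Attracts U t B (omegaLim U t B) := by
  intro ε hε
  by_contra hcon
  push_neg at hcon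
  choose τ hτle y hy hfar using fun n : ℕ => hcon (-(n : ℝ))
  have hτbot : Tendsto τ atTop atBot := by
    apply tendsto_atBot_mono hτle
    exact tendsto_neg_atBot_iff.mpr tendsto_natCast_atTop_atTop
  obtain ⟨x, φ, hφ, hconv⟩ := hac B hB t τ y hτbot hy
  have hτφ : Tendsto (τ ∘ φ) atTop atBot := hτbot.comp hφ.tendsto_atTop
  have hxω : x ∈ omegaLim U t B := ⟨τ ∘ φ, y ∘ φ, hτφ, fun n => hy (φ n), hconv⟩
  have h0 : Tendsto (fun n => Metric.infDist ((y ∘ φ) n) (omegaLim U t B)) atTop (𝓝 0) := by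
    have := (Metric.continuous_infDist_pt (omegaLim U t B)).continuousAt.tendsto.comp hconv
    rwa [Metric.infDist_zero_of_mem hxω] at this
  have : ∀ᶠ n in atTop, Metric.infDist ((y ∘ φ) n) (omegaLim U t B) < ε :=
    h0.eventually (eventually_lt_nhds hε)
  obtain ⟨n, hn⟩ := this.exists
  exact absurd hn (not_lt.mpr (hfar (φ n)).le)
end

section
/- If an m-process U on a Banach space X is pullback flattening, then it is pullback ω-limit compact. -/
open Filter Metric Set Topology Bornology ENNReal

/-- The Kuratowski measure of noncompactness. -/
noncomputable def kuratowski {X : Type*} [PseudoMetricSpace X] (A : Set X) : ℝ≥0∞ :=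
  ⨅ (C : Finset (Set X)) (_ : A ⊆ ⋃ s ∈ C, s), C.sup (fun s => EMetric.diam s)

/-- Pullback ω-limit compactness. -/
def PullbackOmegaLimitCompact {X : Type*} [MetricSpace X] (U : ℝ → ℝ → X → Set X) : Prop :=
  ∀ B : Set X, IsBounded B → ∀ t : ℝ,
    Tendsto (fun τ => kuratowski (⋃ s ∈ Iic τ, uSet U t s B)) atBot (𝓝 0)

/-- Pullback flattening condition on a normed space. -/
def PullbackFlattening {X : Type*} [NormedAddCommGroup X] [NormedSpace ℝ X]
    (U : ℝ → ℝ → X → Set X) : Prop :=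
  ∀ B : Set X, IsBounded B → ∀ t : ℝ, ∀ ε > (0 : ℝ),
    ∃ τ ≤ t, ∃ E : Submodule ℝ X, FiniteDimensional ℝ E ∧
      ∃ P : X → X, (∀ x, P x ∈ E) ∧
        IsBounded (P '' (⋃ s ∈ Iic τ, uSet U t s B)) ∧
        ∀ x ∈ ⋃ s ∈ Iic τ, uSet U t s B, ‖x - P x‖ ≤ ε

theorem flattening_implies_omega_limit_compact {X : Type*} [NormedAddCommGroup X]
    [NormedSpace ℝ X] [CompleteSpace X]
    (U : ℝ → ℝ → X → Set X) (hU : IsMProcess U) (hflat : PullbackFlattening U) :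
    PullbackOmegaLimitCompact U := by
  intro B hB t
  rw [ENNReal.tendsto_nhds_zero]
  intro ε hε
  -- pick a real `r > 0` with `ofReal r ≤ ε`
  obtain ⟨r, hr0, hrε⟩ : ∃ r : ℝ, 0 < r ∧ ENNReal.ofReal r ≤ ε := by
    rcases eq_or_ne ε ⊤ with h | h
    · exact ⟨1, one_pos, by simp [h]⟩
    · exact ⟨ε.toReal, ENNReal.toReal_pos hε.ne' h, by rw [ENNReal.ofReal_toReal h]⟩
  obtain ⟨τ, hτt, E, hE, P, hPE, hPb, hPd⟩ := hflat B hB t (r / 4) (by positivity)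
  set S := ⋃ s ∈ Iic τ, uSet U t s B with hSdef
  -- the image of `S` under `P`, viewed inside `E`, is bounded, hence totally bounded
  let P' : X → E := fun x => ⟨P x, hPE x⟩
  have hP'b : IsBounded (P' '' S) := by
    rcases Metric.isBounded_iff.mp hPb with ⟨C, hC⟩
    refine Metric.isBounded_iff.mpr ⟨C, ?_⟩
    rintro _ ⟨x, hx, rfl⟩ _ ⟨y, hy, rfl⟩
    exact hC ⟨x, hx, rfl⟩ ⟨y, hy, rfl⟩
  have htb : TotallyBounded (P' '' S) :=
    hP'b.isCompact_closure.totallyBounded.subset subset_closure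
  classical
  obtain ⟨F, hFfin, hFcov⟩ := Metric.totallyBounded_iff.mp htb (r / 4) (by positivity)
  -- the finite cover by closed balls of radius `r/2`
  let C : Finset (Set X) := hFfin.toFinset.image fun c : E => Metric.closedBall (c : X) (r / 2)
  have hcov : ∀ x ∈ S, x ∈ ⋃ s ∈ C, s := by
    intro x hx
    have hx' : P' x ∈ ⋃ y ∈ F, Metric.ball y (r / 4) := hFcov ⟨x, hx, rfl⟩
    rcases Set.mem_iUnion₂.mp hx' with ⟨c, hc, hball⟩
    refine Set.mem_iUnion₂.mpr ⟨Metric.closedBall (c : X) (r / 2), ?_, ?_⟩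
    · exact Finset.mem_image.mpr ⟨c, hFfin.mem_toFinset.mpr hc, rfl⟩
    · have h1 : dist x (P x) ≤ r / 4 := by
        rw [dist_eq_norm]; exact hPd x hx
      have h2 : dist (P x) (c : X) < r / 4 := by
        have := Metric.mem_ball.mp hball
        rwa [Subtype.dist_eq] at this
      have : dist x (c : X) ≤ r / 2 :=
        le_trans (dist_triangle x (P x) (c : X)) (by linarith)
      exact Metric.mem_closedBall.mpr this
  have hsup : C.sup (fun s => EMetric.diam s) ≤ ENNReal.ofReal r := by
    refine Finset.sup_le fun s hs => ?_
    rcases Finset.mem_image.mp hs with ⟨c, _, rfl⟩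
    refine EMetric.diam_le fun x hx y hy => ?_
    rw [edist_dist]
    refine ENNReal.ofReal_le_ofReal ?_
    have hx' := Metric.mem_closedBall.mp hx
    have hy' := Metric.mem_closedBall.mp hy
    calc dist x y ≤ dist x (c : X) + dist (c : X) y := dist_triangle _ _ _
      _ ≤ r / 2 + r / 2 := by rw [dist_comm (c : X) y]; exact add_le_add hx' hy'
      _ = r := by ring
  filter_upwards [eventually_le_atBot τ] with τ' hτ'
  have hsub : (⋃ s ∈ Iic τ', uSet U t s B) ⊆ S :=
    Set.biUnion_subset_biUnion_left (Iic_subset_Iic.mpr hτ')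
  have hk : kuratowski (⋃ s ∈ Iic τ', uSet U t s B) ≤ C.sup (fun s => EMetric.diam s) := by
    refine iInf_le_of_le C (iInf_le_of_le ?_ le_rfl)
    exact fun x hx => hcov x (hsub hx)
  exact le_trans hk (le_trans hsup hrε)
end

section
/- If an m-process U on a uniformly convex Banach space X is pullback ω-limit compact, then it is pullback flattening. -/
open Filter Metric Set Topology Bornology ENNReal

theorem omega_limit_compact_implies_flattening {X : Type*} [NormedAddCommGroup X]
    [NormedSpace ℝ X] [UniformConvexSpace X] [CompleteSpace X]
    (U : ℝ → ℝ → X → Set X) (hU : IsMProcess U) (hκ : PullbackOmegaLimitCompact U) :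
    PullbackFlattening U := by
  classical
  intro B hB t ε hε
  have hpos : (0 : ℝ≥0∞) < ENNReal.ofReal ε := by
    simpa using ENNReal.ofReal_pos.mpr hε
  have hev := ((hκ B hB t).eventually_lt_const hpos)
  obtain ⟨T, hT⟩ := Filter.eventually_atBot.mp hev
  refine ⟨min T t, min_le_right _ _, ?_⟩
  set S : Set X := ⋃ s ∈ Iic (min T t), uSet U t s B with hS
  have hκS : kuratowski S < ENNReal.ofReal ε := hT _ (min_le_left _ _)
  rw [kuratowski] at hκS
  obtain ⟨𝒞, h𝒞⟩ := iInf_lt_iff.mp hκS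
  obtain ⟨hcover, hsup⟩ := iInf_lt_iff.mp h𝒞
  -- choose a point in each nonempty cover element
  let f : Set X → X := fun C => if h : C.Nonempty then h.choose else 0
  let pts : Finset X := 𝒞.image f
  refine ⟨Submodule.span ℝ (pts : Set X),
    FiniteDimensional.span_of_finite ℝ pts.finite_toSet, ?_⟩
  let P : X → X := fun x => if h : ∃ y ∈ (pts : Set X), ‖x - y‖ ≤ ε then h.choose else 0
  have hPmem : ∀ x, P x ∈ Submodule.span ℝ (pts : Set X) := by
    intro x
    by_cases h : ∃ y ∈ (pts : Set X), ‖x - y‖ ≤ ε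
    · have := h.choose_spec.1
      simp only [P, dif_pos h]
      exact Submodule.subset_span this
    · simp only [P, dif_neg h]
      exact Submodule.zero_mem _
  refine ⟨P, hPmem, ?_, ?_⟩
  · have hsub : P '' S ⊆ (pts : Set X) ∪ {0} := by
      rintro _ ⟨x, -, rfl⟩
      by_cases h : ∃ y ∈ (pts : Set X), ‖x - y‖ ≤ ε
      · exact Or.inl (by simpa only [P, dif_pos h] using h.choose_spec.1)
      · refine Or.inr ?_
        simp only [P, dif_neg h, Set.mem_singleton_iff]
    exact (pts.finite_toSet.union (Set.finite_singleton 0)).isBounded.subset hsub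
  · intro x hx
    obtain ⟨C, hC𝒞, hxC⟩ := Set.mem_iUnion₂.mp (hcover hx)
    have hCne : C.Nonempty := ⟨x, hxC⟩
    have hfC : f C ∈ C := by
      simp only [f, dif_pos hCne]
      exact hCne.choose_spec
    have hfpts : f C ∈ (pts : Set X) := by
      simp only [pts, Finset.coe_image]
      exact ⟨C, hC𝒞, rfl⟩
    have hd : edist x (f C) < ENNReal.ofReal ε :=
      lt_of_le_of_lt (EMetric.edist_le_diam_of_mem hxC hfC)
        (lt_of_le_of_lt (Finset.le_sup hC𝒞) hsup)
    have hdist : ‖x - f C‖ ≤ ε := by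
      rw [← dist_eq_norm]
      exact (edist_lt_ofReal.mp hd).le
    have h : ∃ y ∈ (pts : Set X), ‖x - y‖ ≤ ε := ⟨f C, hfpts, hdist⟩
    simp only [P, dif_pos h]
    exact h.choose_spec.2
end

section
/- An m-process U is monotonically dissipative if and only if U is dissipative with a backward bounded nonautonomous absorbing set. -/
open Filter Metric Set Topology Bornology

/-- `B₀` is a pullback absorbing nonautonomous set for `U`. -/
def AbsorbsBounded {X : Type*} [MetricSpace X] (U : ℝ → ℝ → X → Set X)
    (B₀ : ℝ → Set X) : Prop :=
  ∀ E : Set X, IsBounded E → ∀ t : ℝ, ∃ τbar ≤ t, ∀ τ ≤ τbar, uSet U t τ E ⊆ B₀ t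

/-- `U` is monotonically dissipative. -/
def MonotonicallyDissipative {X : Type*} [MetricSpace X] (U : ℝ → ℝ → X → Set X) : Prop :=
  ∃ B₀ : ℝ → Set X, (∀ t, IsBounded (B₀ t)) ∧ (∀ s t : ℝ, s ≤ t → B₀ s ⊆ B₀ t) ∧
    AbsorbsBounded U B₀

theorem monotonically_dissipative_iff_backward_bounded {X : Type*} [MetricSpace X]
    (U : ℝ → ℝ → X → Set X) (hU : IsMProcess U) :
    MonotonicallyDissipative U ↔
      ∃ B₀ : ℝ → Set X, (∀ t, IsBounded (B₀ t)) ∧ AbsorbsBounded U B₀ ∧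
        ∀ τ : ℝ, IsBounded (⋃ t ∈ Iic τ, B₀ t) := by
  constructor
  · rintro ⟨B₀, hb, hmono, habs⟩
    refine ⟨B₀, hb, habs, fun τ => (hb τ).subset ?_⟩
    exact iUnion₂_subset fun t ht => hmono t τ ht
  · rintro ⟨B₀, hb, habs, hbb⟩
    refine ⟨fun t => ⋃ s ∈ Iic t, B₀ s, hbb, ?_, ?_⟩
    · intro s t hst
      exact iUnion₂_subset fun r hr x hx => mem_iUnion₂.2 ⟨r, le_trans hr hst, hx⟩
    · intro E hE t
      obtain ⟨τbar, hτ, h⟩ := habs E hE t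
      exact ⟨τbar, hτ, fun τ hτ' x hx => mem_iUnion₂.2 ⟨t, mem_Iic.2 le_rfl, h τ hτ' hx⟩⟩
end

section
/- An m-process U is monotonically dissipative if and only if it is strongly pullback bounded dissipative. -/
open Filter Metric Set Topology Bornology

/-- `U` is strongly pullback bounded dissipative. -/
def StronglyPullbackBoundedDissipative {X : Type*} [MetricSpace X]
    (U : ℝ → ℝ → X → Set X) : Prop :=
  ∃ B₀ : ℝ → Set X, (∀ t, IsBounded (B₀ t)) ∧
    ∀ E : Set X, IsBounded E → ∀ s : ℝ, ∃ τbar : ℝ,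
      ∀ τ ≤ τbar, ∀ t : ℝ, s ≤ t → uSet U s τ E ⊆ B₀ t

theorem monotonically_dissipative_iff_strongly {X : Type*} [MetricSpace X]
    (U : ℝ → ℝ → X → Set X) (hU : IsMProcess U) :
    MonotonicallyDissipative U ↔ StronglyPullbackBoundedDissipative U := by
  constructor
  · rintro ⟨B₀, hb, hmono, habs⟩
    refine ⟨B₀, hb, fun E hE s => ?_⟩
    obtain ⟨τbar, hτs, h⟩ := habs E hE s
    exact ⟨τbar, fun τ hτ t hst => (h τ hτ).trans (hmono s t hst)⟩
  · rintro ⟨B₀, hb, hstr⟩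
    refine ⟨fun t => ⋂ t' ∈ Ici t, B₀ t', fun t => (hb t).subset
      (biInter_subset_of_mem (mem_Ici.mpr le_rfl)), fun s t hst => ?_, fun E hE t => ?_⟩
    · exact fun x hx => mem_biInter fun t' ht' =>
        mem_iInter₂.mp hx t' (hst.trans ht')
    · obtain ⟨τbar, h⟩ := hstr E hE t
      refine ⟨min τbar t, min_le_right _ _, fun τ hτ => ?_⟩
      intro x hx
      exact mem_biInter fun t' ht' =>
        h τ (hτ.trans (min_le_left _ _)) t' ht' hx
end

section
/- Let U be a monotonically dissipative m-process on a complete metric space with monotone bounded absorbing set {B₀(t)}. If for every t ∈ ℝ the set ω(t, B₀(t)) is nonempty, compact, and pullback attracts B₀(t), then U is pullback ω-limit compact. -/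
open Filter Metric Set Topology Bornology ENNReal

theorem omegaLim_of_absorbing_implies_omega_limit_compact {X : Type*} [MetricSpace X]
    [CompleteSpace X] (U : ℝ → ℝ → X → Set X) (hU : IsMProcess U)
    (B₀ : ℝ → Set X) (hbdd : ∀ t, IsBounded (B₀ t))
    (hmono : ∀ s t : ℝ, s ≤ t → B₀ s ⊆ B₀ t) (habs : AbsorbsBounded U B₀)
    (homega : ∀ t : ℝ, (omegaLim U t (B₀ t)).Nonempty ∧
      IsCompact (omegaLim U t (B₀ t)) ∧ Attracts U t (B₀ t) (omegaLim U t (B₀ t))) :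
    PullbackOmegaLimitCompact U := by
  classical
  intro B hB t
  obtain ⟨hne, hKcpt, hattr⟩ := homega t
  rw [ENNReal.tendsto_nhds_zero]
  intro ε hε
  -- choose a positive real `r` with `ofReal r ≤ ε`
  have hmin_ne_top : min ε 1 ≠ ⊤ := ne_top_of_le_ne_top ENNReal.one_ne_top (min_le_right _ _)
  have hmin_pos : 0 < min ε 1 := lt_min hε zero_lt_one
  set r : ℝ := (min ε 1).toReal with hrdef
  have hr : 0 < r := ENNReal.toReal_pos hmin_pos.ne' hmin_ne_top
  have hrε : ENNReal.ofReal r ≤ ε := by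
    rw [hrdef, ENNReal.ofReal_toReal hmin_ne_top]; exact min_le_left _ _
  set δ : ℝ := r / 6 with hδdef
  have hδ : 0 < δ := by positivity
  obtain ⟨T, hT⟩ := hattr δ hδ
  set τ₀ : ℝ := min T t with hτ₀def
  obtain ⟨τbar, hτbar, habs'⟩ := habs B hB τ₀
  -- finite cover of the omega-limit set
  obtain ⟨c, -, hcfin, hccov⟩ := finite_cover_balls_of_compact hKcpt hδ
  set C : Finset (Set X) := hcfin.toFinset.image (fun x => Metric.ball x (3 * δ)) with hCdef
  filter_upwards [eventually_le_atBot τbar] with τ hττ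
  have hsub : (⋃ s ∈ Iic τ, uSet U t s B) ⊆ ⋃ S ∈ C, S := by
    intro y hy
    obtain ⟨s, hs, hy⟩ := Set.mem_iUnion₂.1 hy
    have hsτbar : s ≤ τbar := le_trans hs hττ
    have hsτ₀ : s ≤ τ₀ := le_trans hsτbar hτbar
    obtain ⟨x, hxB, hyx⟩ := Set.mem_iUnion₂.1 hy
    have hstep := hU.2 t τ₀ s hsτ₀ (min_le_right T t) x hyx
    obtain ⟨z, hz, hyz⟩ := Set.mem_iUnion₂.1 hstep
    have hzB₀ : z ∈ B₀ t := by
      have hz' : z ∈ uSet U τ₀ s B := Set.mem_iUnion₂.2 ⟨x, hxB, hz⟩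
      exact hmono τ₀ t (min_le_right T t) (habs' s hsτbar hz')
    have hyU : y ∈ uSet U t τ₀ (B₀ t) := Set.mem_iUnion₂.2 ⟨z, hzB₀, hyz⟩
    have hdist : Metric.infDist y (omegaLim U t (B₀ t)) ≤ δ :=
      hT τ₀ (min_le_left T t) y hyU
    obtain ⟨k, hk, hky⟩ := (Metric.infDist_lt_iff hne).1
      (lt_of_le_of_lt hdist (by linarith : δ < 2 * δ))
    obtain ⟨x₀, hx₀, hkx₀⟩ := Set.mem_iUnion₂.1 (hccov hk)
    refine Set.mem_iUnion₂.2 ⟨Metric.ball x₀ (3 * δ), ?_, ?_⟩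
    · rw [hCdef]; exact Finset.mem_image.2 ⟨x₀, hcfin.mem_toFinset.2 hx₀, rfl⟩
    · have : dist y x₀ ≤ dist y k + dist k x₀ := dist_triangle _ _ _
      have hkx₀' : dist k x₀ < δ := Metric.mem_ball.1 hkx₀
      exact Metric.mem_ball.2 (by linarith)
  have hκ : kuratowski (⋃ s ∈ Iic τ, uSet U t s B) ≤ C.sup (fun s => EMetric.diam s) := by
    exact iInf₂_le C hsub
  refine hκ.trans (le_trans (Finset.sup_le ?_) hrε)
  intro S hS
  rw [hCdef] at hS
  obtain ⟨x₀, -, rfl⟩ := Finset.mem_image.1 hS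
  refine EMetric.diam_le ?_
  intro a ha b hb
  rw [edist_dist]
  refine ENNReal.ofReal_le_ofReal ?_
  have h1 : dist a x₀ < 3 * δ := Metric.mem_ball.1 ha
  have h2 : dist b x₀ < 3 * δ := Metric.mem_ball.1 hb
  have := dist_triangle_right a b x₀
  rw [hδdef] at h1 h2
  linarith
end

section
/- Let U be a t⋆-closed, pullback asymptotically compact, monotonically dissipative m-process on a complete metric space. Then the pullback attractor 𝔸 = {A(t)} satisfies A(t) ⊆ U(t, t−t⋆; A(t−t⋆)) for all t ∈ ℝ. -/
open Filter Metric Set Topology Bornology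

/-- `U` is `t⋆`-closed: the graph of `U(t, t-t⋆; ·)` is closed for every `t`. -/
def TStarClosed {X : Type*} [MetricSpace X] (U : ℝ → ℝ → X → Set X) (tstar : ℝ) : Prop :=
  ∀ t : ℝ, ∀ (η : ℕ → X) (η₀ : X) (ξ : ℕ → X) (ξ₀ : X),
    Tendsto η atTop (𝓝 η₀) → (∀ n, ξ n ∈ U t (t - tstar) (η n)) →
    Tendsto ξ atTop (𝓝 ξ₀) → ξ₀ ∈ U t (t - tstar) η₀

theorem attractor_negatively_invariant_tstar {X : Type*} [MetricSpace X]
    [CompleteSpace X] (U : ℝ → ℝ → X → Set X) (hU : IsMProcess U)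
    (tstar : ℝ) (htstar : 0 < tstar) (hclosed : TStarClosed U tstar)
    (hac : PullbackAsympCompact U)
    (B₀ : ℝ → Set X) (hbdd : ∀ t, IsBounded (B₀ t))
    (hmono : ∀ s t : ℝ, s ≤ t → B₀ s ⊆ B₀ t) (habs : AbsorbsBounded U B₀)
    (A : ℝ → Set X) (hA : A = fun t => omegaLim U t (B₀ t)) :
    ∀ t : ℝ, A t ⊆ uSet U t (t - tstar) (A (t - tstar)) := by
  intro t x hx
  rw [hA] at hx
  rw [hA]
  obtain ⟨τ, ξ, hτ, hξ, hlim⟩ := hx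
  -- absorbing times for the sequence s_k = t - tstar - k
  have habs' : ∀ k : ℕ, ∃ τb, τb ≤ t - tstar - k ∧ ∀ τ' ≤ τb,
      uSet U (t - tstar - k) τ' (B₀ t) ⊆ B₀ (t - tstar - k) := by
    intro k
    obtain ⟨τb, h1, h2⟩ := habs (B₀ t) (hbdd t) (t - tstar - k)
    exact ⟨τb, h1, h2⟩
  choose τb hτb hτabs using habs'
  have hev : ∀ k : ℕ, ∀ᶠ n in atTop, τ n ≤ τb k :=
    fun k => hτ.eventually (eventually_le_atBot (τb k))
  obtain ⟨ψ, hψmono, hψ⟩ := Filter.extraction_forall_of_eventually' (fun k => eventually_atTop.mp (hev k))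
  have hsk : ∀ k : ℕ, t - tstar - (k : ℝ) ≤ t - tstar := by
    intro k
    have : (0:ℝ) ≤ (k:ℝ) := Nat.cast_nonneg k
    linarith
  have hτle : ∀ k, τ (ψ k) ≤ t - tstar := fun k =>
    le_trans (le_trans (hψ k) (hτb k)) (hsk k)
  have key : ∀ k : ℕ, ∃ η, η ∈ uSet U (t - tstar) (t - tstar - k) (B₀ (t - tstar)) ∧
      ξ (ψ k) ∈ U t (t - tstar) η := by
    intro k
    have hmem := hξ (ψ k)
    simp only [uSet, mem_iUnion, exists_prop] at hmem
    obtain ⟨z, hz, hξz⟩ := hmem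
    have h1 := hU.2 t (t - tstar) (τ (ψ k)) (hτle k) (by linarith) z hξz
    simp only [uSet, mem_iUnion, exists_prop] at h1
    obtain ⟨η, hηz, hξη⟩ := h1
    refine ⟨η, ?_, hξη⟩
    have h2 := hU.2 (t - tstar) (t - tstar - k) (τ (ψ k))
      (le_trans (hψ k) (hτb k)) (hsk k) z hηz
    simp only [uSet, mem_iUnion, exists_prop] at h2
    obtain ⟨w, hwz, hηw⟩ := h2
    have hwB : w ∈ B₀ (t - tstar - k) := by
      apply hτabs k (τ (ψ k)) (hψ k)
      simp only [uSet, mem_iUnion, exists_prop]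
      exact ⟨z, hz, hwz⟩
    have hwB' : w ∈ B₀ (t - tstar) := hmono _ _ (hsk k) hwB
    simp only [uSet, mem_iUnion, exists_prop]
    exact ⟨w, hwB', hηw⟩
  choose η hη1 hη2 using key
  have hsTendsto : Tendsto (fun k : ℕ => t - tstar - (k : ℝ)) atTop atBot := by
    have h1 : Tendsto (fun k : ℕ => -(k : ℝ)) atTop atBot :=
      tendsto_neg_atBot_iff.mpr tendsto_natCast_atTop_atTop
    have := tendsto_atBot_add_const_left atTop (t - tstar) h1
    simpa [sub_eq_add_neg] using this
  obtain ⟨η₀, φ, hφmono, hconv⟩ :=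
    hac (B₀ (t - tstar)) (hbdd _) (t - tstar) (fun k => t - tstar - k) η hsTendsto hη1
  have hη₀mem : η₀ ∈ omegaLim U (t - tstar) (B₀ (t - tstar)) :=
    ⟨fun n => t - tstar - (φ n), η ∘ φ, hsTendsto.comp hφmono.tendsto_atTop,
      fun n => hη1 (φ n), hconv⟩
  have hxU : x ∈ U t (t - tstar) η₀ :=
    hclosed t (η ∘ φ) η₀ (fun n => ξ (ψ (φ n))) x hconv (fun n => hη2 (φ n))
      (hlim.comp (hψmono.comp hφmono).tendsto_atTop)
  simp only [uSet, mem_iUnion, exists_prop]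
  exact ⟨η₀, hη₀mem, hxU⟩
end

section
/- Let Z = [0,1] × [0,∞) and define the semiflow S(t;(x₀,y₀)) = (x₀, max(y₀ − x₀t, 0)) for x₀ > 0 and S(t;(0,y₀)) = (0, max(y₀ − t, 0)). Then S is a strict semiflow that is point-dissipative and asymptotically compact but not dissipative: for every M > 0, the set [0,1]×[0,M] does not absorb the bounded set [0,1]×{2M}, since for x₀ = 1/n and t_n = Mn/2 the point S(t_n;(1/n,2M)) has second coordinate 3M/2 > M, with t_n → ∞. -/
open Filter Metric Set Topology Bornology

/-- The phase space `Z = [0,1] × [0,∞)`. -/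
def Zset : Set (ℝ × ℝ) := Icc (0 : ℝ) 1 ×ˢ Ici (0 : ℝ)

/-- The semiflow: the first coordinate is constant; the second decreases with
speed `x₀` when `x₀ > 0` and speed `1` when `x₀ = 0`, stopped at `0`. -/
noncomputable def Sflow (t : ℝ) (p : ℝ × ℝ) : ℝ × ℝ :=
  (p.1, max (p.2 - (if p.1 = 0 then 1 else p.1) * t) 0)

/-! Every orbit reaches the segment `[0,1] × {0}` in finite time, since the speed is positive
at every point. But the speed `x₀` tends to `0` as `x₀ → 0⁺`, so the points `(1/n, 2M)` of the
bounded set `[0,1] × {2M}` stay above height `M` for times `t_n = Mn/2 → ∞`, and no bounded set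
absorbs it. Asymptotic compactness holds because `S(t; ·)` never increases the second
coordinate, so a bounded set stays in a compact rectangle. -/

lemma max_sub_max_zero_of_nonneg {a b : ℝ} (hb : 0 ≤ b) :
    max (max a 0 - b) 0 = max (a - b) 0 := by
  rcases le_total a 0 with ha | ha
  · simp only [max_eq_right ha, zero_sub, max_eq_right (neg_nonpos.mpr hb),
      max_eq_right (by linarith : a - b ≤ 0)]
  · rw [max_eq_left ha]

lemma Sflow_speed_pos {x : ℝ} (hx : 0 ≤ x) : 0 < (if x = 0 then 1 else x) := by
  split_ifs with h
  · exact one_pos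
  · exact lt_of_le_of_ne hx (Ne.symm h)

lemma Sflow_zero {p : ℝ × ℝ} (hp : 0 ≤ p.2) : Sflow 0 p = p := by
  simp [Sflow, max_eq_left hp]

lemma Sflow_add {t τ : ℝ} (ht : 0 ≤ t) {p : ℝ × ℝ} (hp : 0 ≤ p.1) :
    Sflow (t + τ) p = Sflow t (Sflow τ p) := by
  have hct := mul_nonneg (Sflow_speed_pos hp).le ht
  refine Prod.ext rfl ?_
  convert (max_sub_max_zero_of_nonneg
    (a := p.2 - (if p.1 = 0 then 1 else p.1) * τ) hct).symm using 2
  · simp only [Sflow]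
    congr 1
    ring
  · rfl

lemma Sflow_mem_Zset (t : ℝ) {p : ℝ × ℝ} (hp : p ∈ Zset) : Sflow t p ∈ Zset :=
  ⟨hp.1, mem_Ici.mpr (le_max_right _ _)⟩

lemma Sflow_snd_eq_zero {t : ℝ} {p : ℝ × ℝ} (hp : 0 ≤ p.1)
    (ht : p.2 / (if p.1 = 0 then 1 else p.1) ≤ t) : (Sflow t p).2 = 0 := by
  have hc := Sflow_speed_pos hp
  have : p.2 ≤ (if p.1 = 0 then 1 else p.1) * t := (div_le_iff₀' hc).mp ht
  exact max_eq_right (by linarith)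

lemma Sflow_snd_le {t : ℝ} (ht : 0 ≤ t) {p : ℝ × ℝ} (hp : 0 ≤ p.1) :
    (Sflow t p).2 ≤ max p.2 0 :=
  max_le_max_right 0 (sub_le_self _ (mul_nonneg (Sflow_speed_pos hp).le ht))

lemma Sflow_mem_rectangle {t R : ℝ} (ht : 0 ≤ t) {p : ℝ × ℝ} (hp : p ∈ Zset) (hR : p.2 ≤ R) :
    Sflow t p ∈ Icc (0 : ℝ) 1 ×ˢ Icc (0 : ℝ) R :=
  ⟨hp.1, le_max_right _ _, (Sflow_snd_le ht hp.1.1).trans (max_le hR (hp.2.trans hR))⟩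

lemma Sflow_snd_of_pos {x : ℝ} (hx : 0 < x) (t y : ℝ) :
    (Sflow t (x, y)).2 = max (y - x * t) 0 := by
  simp [Sflow, hx.ne']

lemma Sflow_snd_inv_nat {M : ℝ} (hM : 0 ≤ M) {n : ℕ} (hn : 1 ≤ n) :
    (Sflow (M * n / 2) ((1 : ℝ) / n, 2 * M)).2 = 3 * M / 2 := by
  have hn0 : (0 : ℝ) < n := by exact_mod_cast hn
  rw [Sflow_snd_of_pos (by positivity)]
  have : 2 * M - 1 / n * (M * n / 2) = 3 * M / 2 := by
    field_simp
    ring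
  rw [this, max_eq_left (by linarith)]

lemma exists_snd_bound_of_isBounded {B : Set (ℝ × ℝ)} (hB : IsBounded B) :
    ∃ R, ∀ p ∈ B, p.2 ≤ R := by
  obtain ⟨R, hR⟩ := isBounded_iff_forall_norm_le.mp hB
  exact ⟨R, fun p hp => (le_abs_self p.2).trans ((norm_snd_le p).trans (hR p hp))⟩

lemma Sflow_asymptotically_compact {B : Set (ℝ × ℝ)} (hBZ : B ⊆ Zset) (hB : IsBounded B)
    {tn : ℕ → ℝ} {zn : ℕ → ℝ × ℝ} (htn : Tendsto tn atTop atTop) (hzn : ∀ n, zn n ∈ B) :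
    ∃ (w : ℝ × ℝ) (φ : ℕ → ℕ), StrictMono φ ∧
      Tendsto (fun n => Sflow (tn (φ n)) (zn (φ n))) atTop (𝓝 w) := by
  obtain ⟨R, hR⟩ := exists_snd_bound_of_isBounded hB
  have hK : IsCompact (Icc (0 : ℝ) 1 ×ˢ Icc (0 : ℝ) R) := isCompact_Icc.prod isCompact_Icc
  have hmem : ∀ᶠ n in atTop, Sflow (tn n) (zn n) ∈ Icc (0 : ℝ) 1 ×ˢ Icc (0 : ℝ) R :=
    (htn.eventually_ge_atTop 0).mono fun n ht =>
      Sflow_mem_rectangle ht (hBZ (hzn n)) (hR _ (hzn n))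
  obtain ⟨w, -, φ, hφ, hconv⟩ := hK.tendsto_subseq' hmem.frequently
  exact ⟨w, φ, hφ, hconv⟩

lemma Sflow_not_absorbs {M : ℝ} (hM : 0 < M) :
    ¬ ∃ T : ℝ, ∀ t ≥ T, ∀ p ∈ Icc (0 : ℝ) 1 ×ˢ ({2 * M} : Set ℝ),
      Sflow t p ∈ Icc (0 : ℝ) 1 ×ˢ Icc (0 : ℝ) M := by
  rintro ⟨T, hT⟩
  obtain ⟨n, hn⟩ := exists_nat_ge (max 1 (2 * T / M))
  have hn1 : 1 ≤ n := by exact_mod_cast (le_max_left _ _).trans hn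
  have hn0 : (0 : ℝ) < n := by exact_mod_cast hn1
  have htT : T ≤ M * n / 2 := by
    have := (div_le_iff₀ hM).mp ((le_max_right _ _).trans hn)
    linarith
  have hp : ((1 : ℝ) / n, 2 * M) ∈ Icc (0 : ℝ) 1 ×ˢ ({2 * M} : Set ℝ) :=
    ⟨⟨by positivity, (div_le_one hn0).mpr (by exact_mod_cast hn1)⟩, rfl⟩
  have hle := (hT _ htT _ hp).2.2
  rw [Sflow_snd_inv_nat hM.le hn1] at hle
  linarith

theorem Sflow_point_dissipative_not_dissipative :
    -- `Sflow` is a strict semiflow on `Z`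
    (∀ p ∈ Zset, Sflow 0 p = p) ∧
    (∀ t τ : ℝ, 0 ≤ t → 0 ≤ τ → ∀ p ∈ Zset, Sflow (t + τ) p = Sflow t (Sflow τ p)) ∧
    (∀ t : ℝ, 0 ≤ t → ∀ p ∈ Zset, Sflow t p ∈ Zset) ∧
    -- point-dissipative
    (∃ B₀ : Set (ℝ × ℝ), IsBounded B₀ ∧ B₀ ⊆ Zset ∧
      ∀ p ∈ Zset, ∃ T : ℝ, ∀ t ≥ T, Sflow t p ∈ B₀) ∧
    -- asymptotically compact
    (∀ B ⊆ Zset, IsBounded B → ∀ (tn : ℕ → ℝ) (zn : ℕ → ℝ × ℝ),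
      Tendsto tn atTop atTop → (∀ n, zn n ∈ B) →
      ∃ (w : ℝ × ℝ) (φ : ℕ → ℕ), StrictMono φ ∧
        Tendsto (fun n => Sflow (tn (φ n)) (zn (φ n))) atTop (𝓝 w)) ∧
    -- not dissipative: `[0,1] × [0,M]` does not absorb `[0,1] × {2M}`
    (∀ M : ℝ, 0 < M →
      (¬ ∃ T : ℝ, ∀ t ≥ T, ∀ p ∈ Icc (0 : ℝ) 1 ×ˢ ({2 * M} : Set ℝ),
        Sflow t p ∈ Icc (0 : ℝ) 1 ×ˢ Icc (0 : ℝ) M) ∧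
      ∀ n : ℕ, 1 ≤ n →
        (Sflow (M * n / 2) ((1 : ℝ) / n, 2 * M)).2 = 3 * M / 2 ∧ M < 3 * M / 2) := by
  refine ⟨fun p hp => Sflow_zero hp.2, fun t τ ht _ p hp => Sflow_add ht hp.1.1,
    fun t _ p hp => Sflow_mem_Zset t hp, ?_,
    fun B hBZ hB tn zn htn hzn => Sflow_asymptotically_compact hBZ hB htn hzn,
    fun M hM => ⟨Sflow_not_absorbs hM, fun n hn => ⟨Sflow_snd_inv_nat hM.le hn, by linarith⟩⟩⟩
  refine ⟨Icc (0 : ℝ) 1 ×ˢ {0}, (isBounded_Icc 0 1).prod isBounded_singleton,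
    prod_mono subset_rfl (by simp), fun p hp => ⟨_, fun t ht => ⟨hp.1, Sflow_snd_eq_zero hp.1.1 ht⟩⟩⟩
end

section
/- For the semiflow S on Z = [0,1] × [0,∞) defined by S(t;(x₀,y₀)) = (x₀, max(y₀ − x₀t, 0)) for x₀ > 0 and S(t;(0,y₀)) = (0, max(y₀ − t, 0)), the map S(t;·) : Z → Z fails to have closed graph for every t > 0: taking z_n = (1/n, y₀) with y₀ > 0, one has z_n → (0,y₀) and S(t;z_n) → (0,y₀), but S(t;(0,y₀)) = (0, max(y₀−t,0)) ≠ (0,y₀). -/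
/-!
Away from the line `x = 0` the second coordinate of `Sflow t` moves with speed `x`, so as
`x → 0` it barely moves and `Sflow t (x, y) → (0, y)`; on the line itself it moves with
speed `1`, so `Sflow t (0, y) ≠ (0, y)` once `t, y > 0`. The points `(1/(n+1), y)` of `Z`
therefore witness that the graph of `Sflow t` is not closed.
-/

open Filter Metric Set Topology Bornology

lemma Sflow_of_ne_zero (t : ℝ) {x : ℝ} (hx : x ≠ 0) (y : ℝ) :
    Sflow t (x, y) = (x, max (y - x * t) 0) := by
  simp [Sflow, hx]

lemma Sflow_zero_s19 (t y : ℝ) : Sflow t (0, y) = (0, max (y - t) 0) := by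
  simp [Sflow]

lemma Sflow_zero_ne_self {t y : ℝ} (ht : 0 < t) (hy : 0 < y) : Sflow t (0, y) ≠ (0, y) := by
  rw [Sflow_zero_s19, Ne, Prod.mk.injEq, not_and]
  exact fun _ ↦ (max_lt (by linarith) hy).ne

lemma tendsto_Sflow_nhdsNE_zero (t : ℝ) {y : ℝ} (hy : 0 ≤ y) :
    Tendsto (fun x ↦ Sflow t (x, y)) (𝓝[≠] 0) (𝓝 (0, y)) := by
  have hcont : Continuous fun x : ℝ ↦ (x, max (y - x * t) 0) := by fun_prop
  have hlim : Tendsto (fun x : ℝ ↦ (x, max (y - x * t) 0)) (𝓝[≠] 0) (𝓝 (0, y)) := by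
    simpa [max_eq_left hy] using (hcont.tendsto 0).mono_left nhdsWithin_le_nhds
  refine hlim.congr' (eventually_nhdsWithin_of_forall fun x hx ↦ ?_)
  exact (Sflow_of_ne_zero t hx y).symm

lemma one_div_add_one_mem_Icc (n : ℕ) : (1 : ℝ) / (n + 1) ∈ Icc 0 1 :=
  ⟨by positivity, div_le_one_of_le₀ (by linarith [n.cast_nonneg (α := ℝ)]) (by positivity)⟩

lemma tendsto_one_div_add_one_nhdsNE_zero :
    Tendsto (fun n : ℕ ↦ (1 : ℝ) / (n + 1)) atTop (𝓝[≠] 0) :=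
  tendsto_nhdsWithin_of_tendsto_nhds_of_eventually_within _
    tendsto_one_div_add_atTop_nhds_zero_nat (Eventually.of_forall fun n ↦ by
      simp only [mem_compl_iff, mem_singleton_iff]; positivity)

/-- `Sflow t` fails to have closed graph on `Z` for every `t > 0`: the points
`z_n = (1/(n+1), y₀)` converge to `(0,y₀)`, their images converge to `(0,y₀)`,
but `Sflow t (0,y₀) ≠ (0,y₀)`. -/
theorem Sflow_not_closed_graph :
    ∀ t : ℝ, 0 < t → ∀ y₀ : ℝ, 0 < y₀ →
      (∀ n : ℕ, ((1 : ℝ) / (n + 1), y₀) ∈ Zset) ∧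
      Tendsto (fun n : ℕ => (((1 : ℝ) / (n + 1), y₀) : ℝ × ℝ)) atTop (𝓝 (0, y₀)) ∧
      Tendsto (fun n : ℕ => Sflow t ((1 : ℝ) / (n + 1), y₀)) atTop (𝓝 (0, y₀)) ∧
      Sflow t (0, y₀) = (0, max (y₀ - t) 0) ∧
      Sflow t (0, y₀) ≠ (0, y₀) := by
  intro t ht y₀ hy₀
  refine ⟨fun n ↦ ⟨one_div_add_one_mem_Icc n, mem_Ici.2 hy₀.le⟩, ?_, ?_, Sflow_zero_s19 t y₀,
    Sflow_zero_ne_self ht hy₀⟩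
  · exact tendsto_one_div_add_atTop_nhds_zero_nat.prodMk_nhds tendsto_const_nhds
  · exact (tendsto_Sflow_nhdsNE_zero t hy₀.le).comp tendsto_one_div_add_one_nhdsNE_zero
end
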